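/- For all a > 0 and T > 0, the principal-value integrals ∫_a^{3a} exp(iT(ξ - ξ⁻¹))/(ξ - 2a) dξ are uniformly bounded in a and T. -/

import Mathlib

/-!
Folding the principal value about the singularity turns it into the absolutely convergent
integral `∫₀^a (k(2a + t) + k(2a - t)) dt` of the symmetrised kernel, whose integrand is
`(e^{iφ(2a+t)} - e^{iφ(2a-t)}) / t` for the phase `φ(ξ) = T(ξ - ξ⁻¹)`. On `[a, ∞)` the phase is
`φ'(a)`-Lipschitz, so this integrand is bounded by `2φ'(a)`, and the part `t < δ := 1/φ'(a)`
contributes at most `2`. On the remaining part, where `|ξ - 2a| ≥ δ`, the kernel is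
`v(ξ) · (i e^{iφ})'(ξ)` with the real weight `v = -1/((ξ - 2a)φ'(ξ))`. Since `(ξ - 2a)φ'(ξ)` is
increasing on `[a, 3a]`, the weight is monotone and bounded by `9`, and one integration by parts
(van der Corput's first-derivative argument) bounds each side by `2 · (9 + 9)`.
-/

open MeasureTheory Filter Set Topology Complex

section PrincipalValue

variable {E : Type*} [NormedAddCommGroup E] {f : ℝ → E} {c r ε : ℝ}

theorem integral_comp_add_add_comp_sub [NormedSpace ℝ E]
    (hright : IntervalIntegrable f volume (c + ε) (c + r))
    (hleft : IntervalIntegrable f volume (c - r) (c - ε)) :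
    ∫ t in ε..r, (f (c + t) + f (c - t)) =
      (∫ x in (c + ε)..(c + r), f x) + ∫ x in (c - r)..(c - ε), f x := by
  have iright : IntervalIntegrable (fun t ↦ f (c + t)) volume ε r := by
    simpa using hright.comp_add_left c
  have ileft : IntervalIntegrable (fun t ↦ f (c - t)) volume ε r := by
    simpa using hleft.symm.comp_sub_left c
  rw [intervalIntegral.integral_add iright ileft, intervalIntegral.integral_comp_add_left,
    intervalIntegral.integral_comp_sub_left]

theorem intervalIntegrable_of_continuousOn_punctured
    (hf : ContinuousOn f (Icc (c - r) (c + r) \ {c})) (hε : 0 < ε) (hεr : ε ≤ r) :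
    IntervalIntegrable f volume (c + ε) (c + r) ∧ IntervalIntegrable f volume (c - r) (c - ε) :=
  ⟨(hf.mono fun x hx ↦ ⟨⟨by linarith [hx.1], hx.2⟩, by rintro rfl; linarith [hx.1]⟩)
      |>.intervalIntegrable_of_Icc (by linarith),
    (hf.mono fun x hx ↦ ⟨⟨hx.1, by linarith [hx.2]⟩, by rintro rfl; linarith [hx.2]⟩)
      |>.intervalIntegrable_of_Icc (by linarith)⟩

theorem setIntegral_punctured_eq [NormedSpace ℝ E] [CompleteSpace E]
    (hf : ContinuousOn f (Icc (c - r) (c + r) \ {c})) (hε : 0 < ε) (hεr : ε ≤ r) :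
    ∫ x in {x | c - r < x ∧ x < c + r ∧ ε < |x - c|}, f x =
      ∫ t in ε..r, (f (c + t) + f (c - t)) := by
  have hset : {x | c - r < x ∧ x < c + r ∧ ε < |x - c|} =
      Ioo (c + ε) (c + r) ∪ Ioo (c - r) (c - ε) := by
    ext x
    simp only [mem_ofPred_eq, mem_union, mem_Ioo, lt_abs]
    constructor
    · rintro ⟨h₁, h₂, h₃ | h₃⟩
      · exact Or.inl ⟨by linarith, h₂⟩
      · exact Or.inr ⟨h₁, by linarith⟩
    · rintro (⟨h₁, h₂⟩ | ⟨h₁, h₂⟩)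
      · exact ⟨by linarith, h₂, Or.inl (by linarith)⟩
      · exact ⟨h₁, by linarith, Or.inr (by linarith)⟩
  obtain ⟨hright, hleft⟩ := intervalIntegrable_of_continuousOn_punctured hf hε hεr
  have hdisj : Disjoint (Ioo (c + ε) (c + r)) (Ioo (c - r) (c - ε)) :=
    disjoint_left.2 fun x h₁ h₂ ↦ by linarith [h₁.1, h₂.2]
  rw [hset, setIntegral_union hdisj measurableSet_Ioo (hright.1.mono_set Ioo_subset_Ioc_self)
      (hleft.1.mono_set Ioo_subset_Ioc_self), ← integral_Ioc_eq_integral_Ioo,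
    ← integral_Ioc_eq_integral_Ioo, ← intervalIntegral.integral_of_le (by linarith),
    ← intervalIntegral.integral_of_le (by linarith), integral_comp_add_add_comp_sub hright hleft]

theorem tendsto_setIntegral_punctured [NormedSpace ℝ E] [CompleteSpace E]
    (hf : ContinuousOn f (Icc (c - r) (c + r) \ {c}))
    (hg : IntervalIntegrable (fun t ↦ f (c + t) + f (c - t)) volume 0 r) (hr : 0 < r) :
    Tendsto (fun ε ↦ ∫ x in {x | c - r < x ∧ x < c + r ∧ ε < |x - c|}, f x) (𝓝[>] 0)
      (𝓝 (∫ t in (0)..r, (f (c + t) + f (c - t)))) := by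
  have hcont := intervalIntegral.continuousOn_primitive_interval_left
    (f := fun t ↦ f (c + t) + f (c - t)) (μ := volume)
    (by rwa [uIcc_of_le hr.le, ← intervalIntegrable_iff_integrableOn_Icc_of_le hr.le]) 0
    left_mem_uIcc
  rw [uIcc_of_le hr.le] at hcont
  refine (hcont.tendsto.mono_left (nhdsWithin_le_of_mem (Icc_mem_nhdsGT hr))).congr' ?_
  filter_upwards [Ioc_mem_nhdsGT hr] with ε hε
  exact (setIntegral_punctured_eq hf hε.1 hε.2).symm

end PrincipalValue

theorem norm_integral_smul_deriv_le_of_deriv_nonneg {E : Type*} [NormedAddCommGroup E]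
    [NormedSpace ℝ E] [CompleteSpace E] {F F' : ℝ → E} {v v' : ℝ → ℝ} {p q M : ℝ}
    (hpq : p ≤ q) (hF : ∀ x ∈ Icc p q, HasDerivAt F (F' x) x)
    (hF' : IntervalIntegrable F' volume p q) (hFM : ∀ x ∈ Icc p q, ‖F x‖ ≤ M)
    (hv : ∀ x ∈ Icc p q, HasDerivAt v (v' x) x) (hv' : ∀ x ∈ Icc p q, 0 ≤ v' x) :
    ‖∫ x in p..q, v x • F' x‖ ≤ 2 * M * (|v p| + |v q|) := by
  have hIoo : Ioo (min p q) (max p q) ⊆ Icc p q := by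
    rw [min_eq_left hpq, max_eq_right hpq]; exact Ioo_subset_Icc_self
  have hv'int : IntervalIntegrable v' volume p q :=
    intervalIntegral.intervalIntegrable_deriv_of_nonneg
      (fun x hx ↦ (hv x (uIcc_of_le hpq ▸ hx)).continuousAt.continuousWithinAt)
      (fun x hx ↦ hv x (hIoo hx)) (fun x hx ↦ hv' x (hIoo hx))
  rw [← uIcc_of_le hpq] at hF hv
  have hM : 0 ≤ M := (norm_nonneg _).trans (hFM p ⟨le_rfl, hpq⟩)
  have hrem : ‖∫ x in p..q, v' x • F x‖ ≤ M * (v q - v p) := by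
    calc ‖∫ x in p..q, v' x • F x‖ ≤ ∫ x in p..q, M * v' x := by
          refine intervalIntegral.norm_integral_le_of_norm_le hpq (ae_of_all _ fun x hx ↦ ?_)
            (hv'int.const_mul M)
          have hx' := Ioc_subset_Icc_self hx
          rw [norm_smul, Real.norm_of_nonneg (hv' x hx'), mul_comm]
          exact mul_le_mul_of_nonneg_right (hFM x hx') (hv' x hx')
      _ = M * (v q - v p) := by
          rw [intervalIntegral.integral_const_mul,
            intervalIntegral.integral_eq_sub_of_hasDerivAt hv hv'int]
  rw [intervalIntegral.integral_smul_deriv_eq_deriv_smul hv hF hv'int hF']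
  calc ‖v q • F q - v p • F p - ∫ x in p..q, v' x • F x‖
      ≤ |v q| * M + |v p| * M + M * (v q - v p) := by
        refine (norm_sub_le _ _).trans (add_le_add ((norm_sub_le _ _).trans ?_) hrem)
        rw [norm_smul, norm_smul]
        exact add_le_add (mul_le_mul_of_nonneg_left (hFM q ⟨hpq, le_rfl⟩) (norm_nonneg _))
          (mul_le_mul_of_nonneg_left (hFM p ⟨le_rfl, hpq⟩) (norm_nonneg _))
    _ ≤ 2 * M * (|v p| + |v q|) := by
        nlinarith [mul_le_mul_of_nonneg_left (show v q - v p ≤ |v q| + |v p| by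
          linarith [le_abs_self (v q), neg_abs_le (v p)]) hM]

noncomputable section

namespace OscillatoryPV

def phase (T ξ : ℝ) : ℝ := T * (ξ - ξ⁻¹)

def phaseDeriv (T ξ : ℝ) : ℝ := T * (1 + (ξ ^ 2)⁻¹)

def kernel (c T ξ : ℝ) : ℂ := cexp (phase T ξ * I) / (ξ - c)

variable {a c T ξ : ℝ}

theorem hasDerivAt_phase (hξ : ξ ≠ 0) : HasDerivAt (phase T) (phaseDeriv T ξ) ξ :=
  (((hasDerivAt_id ξ).sub (hasDerivAt_inv hξ)).const_mul T).congr_deriv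
    (by simp [phaseDeriv, sub_eq_add_neg])

theorem hasDerivAt_cexp_phase (hξ : ξ ≠ 0) :
    HasDerivAt (fun x ↦ cexp (phase T x * I)) (cexp (phase T ξ * I) * (phaseDeriv T ξ * I)) ξ :=
  ((hasDerivAt_phase hξ).ofReal_comp.mul_const I).cexp

theorem phaseDeriv_pos (hT : 0 < T) : 0 < phaseDeriv T ξ := by
  unfold phaseDeriv; positivity

theorem phaseDeriv_le (hT : 0 ≤ T) (ha : 0 < a) (haξ : a ≤ ξ) :
    phaseDeriv T ξ ≤ phaseDeriv T a := by
  unfold phaseDeriv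
  gcongr

theorem phaseDeriv_le_nine_mul (hT : 0 ≤ T) (hξ : 0 < ξ) (hξa : ξ ≤ 3 * a) :
    phaseDeriv T a ≤ 9 * phaseDeriv T ξ := by
  unfold phaseDeriv
  have : (a ^ 2)⁻¹ ≤ 9 * (ξ ^ 2)⁻¹ := by
    rw [← div_eq_mul_inv, inv_le_comm₀ (by nlinarith) (by positivity), inv_div]
    nlinarith
  nlinarith

theorem norm_cexp_phase_sub_le (hT : 0 ≤ T) (ha : 0 < a) {x y : ℝ} (hx : a ≤ x) (hy : a ≤ y) :
    ‖cexp (phase T x * I) - cexp (phase T y * I)‖ ≤ phaseDeriv T a * |x - y| := by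
  refine (convex_Ici a).norm_image_sub_le_of_norm_hasDerivWithin_le
    (fun z hz ↦ (hasDerivAt_cexp_phase (by linarith [mem_Ici.1 hz])).hasDerivWithinAt)
    (fun z hz ↦ ?_) hy hx
  rw [norm_mul, norm_exp_ofReal_mul_I, one_mul, norm_mul, norm_I, mul_one, norm_real,
    Real.norm_of_nonneg (by unfold phaseDeriv; positivity)]
  exact phaseDeriv_le hT ha hz

theorem continuousAt_kernel (hξ : ξ ≠ 0) (hξc : ξ ≠ c) : ContinuousAt (kernel c T) ξ :=
  (hasDerivAt_cexp_phase hξ).continuousAt.div (by fun_prop) (by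
    rw [sub_ne_zero]; exact_mod_cast hξc)

theorem continuousOn_kernel {r : ℝ} (hrc : r < c) :
    ContinuousOn (kernel c T) (Icc (c - r) (c + r) \ {c}) := fun ξ hξ ↦
  (continuousAt_kernel (by linarith [hξ.1.1]) hξ.2).continuousWithinAt

theorem kernel_add_add_kernel_sub (t : ℝ) :
    kernel c T (c + t) + kernel c T (c - t) =
      (cexp (phase T (c + t) * I) - cexp (phase T (c - t) * I)) / t := by
  simp only [kernel]
  push_cast
  rw [add_sub_cancel_left, sub_sub_cancel_left, div_neg, ← sub_eq_add_neg, sub_div]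

theorem norm_kernel_symm_le (hT : 0 ≤ T) (ha : 0 < a) {t : ℝ} (ht : t ∈ Ioc 0 a) :
    ‖kernel (2 * a) T (2 * a + t) + kernel (2 * a) T (2 * a - t)‖ ≤ 2 * phaseDeriv T a := by
  obtain ⟨ht0, hta⟩ := ht
  rw [kernel_add_add_kernel_sub, norm_div, norm_real, Real.norm_of_nonneg ht0.le,
    div_le_iff₀ ht0]
  calc _ ≤ phaseDeriv T a * |2 * a + t - (2 * a - t)| :=
        norm_cexp_phase_sub_le hT ha (by linarith) (by linarith)
    _ = 2 * phaseDeriv T a * t := by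
        rw [show 2 * a + t - (2 * a - t) = 2 * t by ring, abs_of_pos (by linarith)]; ring

theorem intervalIntegrable_kernel_symm (hT : 0 ≤ T) (ha : 0 < a) :
    IntervalIntegrable (fun t ↦ kernel (2 * a) T (2 * a + t) + kernel (2 * a) T (2 * a - t))
      volume 0 a := by
  rw [intervalIntegrable_iff_integrableOn_Ioc_of_le ha.le]
  refine Integrable.mono' (g := fun _ ↦ 2 * phaseDeriv T a) (integrableOn_const (by simp))
    ?_ ?_
  · refine ContinuousOn.aestronglyMeasurable (fun t ht ↦ ?_) measurableSet_Ioc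
    obtain ⟨ht0, hta⟩ := ht
    refine ContinuousAt.continuousWithinAt (ContinuousAt.add ?_ ?_)
    · exact (continuousAt_kernel (by linarith) (by linarith)).comp (by fun_prop)
    · exact (continuousAt_kernel (by linarith) (by linarith)).comp (by fun_prop)
  · exact (ae_restrict_iff' measurableSet_Ioc).2
      (ae_of_all _ fun t ht ↦ norm_kernel_symm_le hT ha ht)

theorem continuousAt_phaseDeriv (hξ : ξ ≠ 0) : ContinuousAt (phaseDeriv T) ξ := by
  unfold phaseDeriv
  fun_prop (disch := positivity)

theorem hasDerivAt_sub_mul_phaseDeriv (hξ : ξ ≠ 0) :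
    HasDerivAt (fun x ↦ (x - c) * phaseDeriv T x) (T * (ξ ^ 3 - ξ + 2 * c) / ξ ^ 3) ξ := by
  have := ((hasDerivAt_id ξ).sub_const c).mul
    ((((hasDerivAt_pow 2 ξ).inv (pow_ne_zero 2 hξ)).const_add 1).const_mul T)
  refine this.congr_deriv ?_
  simp only [Pi.inv_apply, id]
  field_simp
  ring

theorem inv_nine_le_abs_sub_mul_phaseDeriv (hT : 0 < T) (hξ : 0 < ξ) (hξa : ξ ≤ 3 * a)
    (hsep : (phaseDeriv T a)⁻¹ ≤ |ξ - 2 * a|) :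
    9⁻¹ ≤ |(ξ - 2 * a) * phaseDeriv T ξ| := by
  have ha := phaseDeriv_pos (ξ := a) hT
  have hξ' := phaseDeriv_pos (ξ := ξ) hT
  rw [abs_mul, abs_of_pos hξ']
  calc 9⁻¹ = (phaseDeriv T a)⁻¹ * (phaseDeriv T a / 9) := by field_simp
    _ ≤ |ξ - 2 * a| * phaseDeriv T ξ := by
        gcongr
        linarith [phaseDeriv_le_nine_mul hT.le hξ hξa]

theorem norm_integral_kernel_le (hT : 0 < T) (ha : 0 < a) {p q : ℝ} (hpq : p ≤ q) (hap : a ≤ p)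
    (hq : q ≤ 3 * a) (hsep : ∀ ξ ∈ Icc p q, (phaseDeriv T a)⁻¹ ≤ |ξ - 2 * a|) :
    ‖∫ ξ in p..q, kernel (2 * a) T ξ‖ ≤ 36 := by
  set P : ℝ → ℝ := fun x ↦ (x - 2 * a) * phaseDeriv T x
  have hpos : ∀ ξ ∈ Icc p q, 0 < ξ := fun ξ hξ ↦ by linarith [hξ.1]
  have hP : ∀ ξ ∈ Icc p q, 9⁻¹ ≤ |P ξ| := fun ξ hξ ↦
    inv_nine_le_abs_sub_mul_phaseDeriv hT (hpos ξ hξ) (by linarith [hξ.2]) (hsep ξ hξ)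
  have hP0 : ∀ ξ ∈ Icc p q, P ξ ≠ 0 := fun ξ hξ h ↦ by
    have := hP ξ hξ; rw [h, abs_zero] at this; norm_num at this
  have hweight : ∀ ξ ∈ Icc p q, |-(P ξ)⁻¹| ≤ 9 := fun ξ hξ ↦ by
    rw [abs_neg, abs_inv]
    exact inv_le_of_inv_le₀ (by norm_num) (hP ξ hξ)
  have key := norm_integral_smul_deriv_le_of_deriv_nonneg (M := 1) hpq
    (F := fun ξ ↦ I * cexp (phase T ξ * I)) (v := fun ξ ↦ -(P ξ)⁻¹)
    (fun ξ hξ ↦ (hasDerivAt_cexp_phase (hpos ξ hξ).ne').const_mul I) ?_ ?_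
    (fun ξ hξ ↦ ((hasDerivAt_sub_mul_phaseDeriv (c := 2 * a) (hpos ξ hξ).ne').inv
      (hP0 ξ hξ)).neg) ?_
  · have hint : ∀ ξ ∈ Icc p q,
        (-(P ξ)⁻¹) • (I * (cexp (phase T ξ * I) * (phaseDeriv T ξ * I))) =
          kernel (2 * a) T ξ := fun ξ hξ ↦ by
      have h1 : ((ξ : ℂ) - 2 * a) ≠ 0 := mod_cast left_ne_zero_of_mul (hP0 ξ hξ)
      have h2 : (phaseDeriv T ξ : ℂ) ≠ 0 := mod_cast (phaseDeriv_pos hT).ne'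
      simp only [P, kernel, real_smul]
      push_cast
      field_simp
      rw [I_sq, neg_neg]
    rw [intervalIntegral.integral_congr fun ξ hξ ↦ (hint ξ (uIcc_of_le hpq ▸ hξ)).symm]
    refine key.trans ?_
    linarith [hweight p ⟨le_rfl, hpq⟩, hweight q ⟨hpq, le_rfl⟩]
  · refine ContinuousOn.intervalIntegrable_of_Icc hpq fun ξ hξ ↦
      ContinuousAt.continuousWithinAt ?_
    have hξ := (hpos ξ hξ).ne'
    exact continuousAt_const.mul ((hasDerivAt_cexp_phase hξ).continuousAt.mul
      ((continuous_ofReal.continuousAt.comp (continuousAt_phaseDeriv hξ)).mul continuousAt_const))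
  · intro ξ _
    rw [norm_mul, norm_I, norm_exp_ofReal_mul_I, one_mul]
  · -- `(ξ - 2a) φ'(ξ)` is increasing on `(0, 4a]`
    intro ξ hξ
    rw [neg_div, neg_neg]
    have hξ0 := hpos ξ hξ
    have hξa : ξ ≤ 3 * a := by linarith [hξ.2]
    refine div_nonneg (div_nonneg (mul_nonneg hT.le ?_) (by positivity)) (sq_nonneg _)
    nlinarith [pow_pos hξ0 3]

theorem norm_integral_kernel_symm_le (hT : 0 < T) (ha : 0 < a) :
    ‖∫ t in (0)..a, (kernel (2 * a) T (2 * a + t) + kernel (2 * a) T (2 * a - t))‖ ≤ 74 := by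
  set g := fun t ↦ kernel (2 * a) T (2 * a + t) + kernel (2 * a) T (2 * a - t)
  set δ := (phaseDeriv T a)⁻¹
  have hder : 0 < phaseDeriv T a := phaseDeriv_pos hT
  have hg := intervalIntegrable_kernel_symm hT.le ha
  have hnear : ∀ s ∈ Icc 0 a, ‖∫ t in (0)..s, g t‖ ≤ 2 * phaseDeriv T a * s := fun s hs ↦ by
    have := intervalIntegral.norm_integral_le_of_norm_le_const fun t ht ↦
      norm_kernel_symm_le hT.le ha (t := t) (by
        rw [uIoc_of_le hs.1] at ht; exact ⟨ht.1, ht.2.trans hs.2⟩)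
    rwa [sub_zero, abs_of_nonneg hs.1] at this
  have hδder : 2 * phaseDeriv T a * δ = 2 := by
    rw [mul_assoc, mul_inv_cancel₀ hder.ne', mul_one]
  rcases le_or_gt a δ with haδ | hδa
  · calc _ ≤ 2 * phaseDeriv T a * a := hnear a ⟨ha.le, le_rfl⟩
      _ ≤ 2 * phaseDeriv T a * δ := by gcongr
      _ ≤ 74 := by linarith
  have hδ : 0 < δ := inv_pos.2 hder
  have hpieces := intervalIntegrable_of_continuousOn_punctured
    (continuousOn_kernel (c := 2 * a) (r := a) (T := T) (by linarith)) hδ hδa.le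
  rw [← intervalIntegral.integral_add_adjacent_intervals (b := δ)
      (hg.mono_set (uIcc_subset_uIcc_left (by simp [uIcc_of_le ha.le, hδ.le, hδa.le])))
      (hg.mono_set (uIcc_subset_uIcc_right (by simp [uIcc_of_le ha.le, hδ.le, hδa.le]))),
    integral_comp_add_add_comp_sub hpieces.1 hpieces.2]
  have hright := norm_integral_kernel_le hT ha (p := 2 * a + δ) (q := 2 * a + a) (by linarith)
    (by linarith) (by linarith) fun ξ hξ ↦ by
      rw [abs_of_nonneg (by linarith [hξ.1])]; linarith [hξ.1]
  have hleft := norm_integral_kernel_le hT ha (p := 2 * a - a) (q := 2 * a - δ) (by linarith)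
    (by linarith) (by linarith) fun ξ hξ ↦ by
      rw [abs_of_nonpos (by linarith [hξ.2])]; linarith [hξ.2]
  have := hnear δ ⟨hδ.le, hδa.le⟩
  calc _ ≤ ‖∫ t in (0)..δ, g t‖ + ‖(∫ ξ in (2 * a + δ)..(2 * a + a), kernel (2 * a) T ξ) +
          ∫ ξ in (2 * a - a)..(2 * a - δ), kernel (2 * a) T ξ‖ := norm_add_le _ _
    _ ≤ ‖∫ t in (0)..δ, g t‖ + (‖∫ ξ in (2 * a + δ)..(2 * a + a), kernel (2 * a) T ξ‖ +
          ‖∫ ξ in (2 * a - a)..(2 * a - δ), kernel (2 * a) T ξ‖) := by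
        gcongr; exact norm_add_le _ _
    _ ≤ 74 := by linarith

end OscillatoryPV

end

open OscillatoryPV in

/-- For all `a > 0` and `T > 0`, the principal-value integrals
`∫_a^{3a} exp(iT(ξ - ξ⁻¹))/(ξ - 2a) dξ` exist and are uniformly bounded in `a` and `T`. -/
theorem stmt4 : ∃ C : ℝ, ∀ a T : ℝ, 0 < a → 0 < T → ∃ L : ℂ,
    Tendsto (fun ε : ℝ =>
        ∫ ξ in {ξ : ℝ | a < ξ ∧ ξ < 3 * a ∧ ε < |ξ - 2 * a|},
          Complex.exp (Complex.I * (T : ℂ) * ((ξ : ℂ) - (ξ : ℂ)⁻¹)) / ((ξ : ℂ) - 2 * (a : ℂ)))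
      (nhdsWithin 0 (Set.Ioi (0 : ℝ))) (nhds L) ∧ ‖L‖ ≤ C := by
  refine ⟨74, fun a T ha hT ↦ ⟨_, ?_, norm_integral_kernel_symm_le hT ha⟩⟩
  have h := tendsto_setIntegral_punctured (continuousOn_kernel (c := 2 * a) (r := a) (T := T)
    (by linarith)) (intervalIntegrable_kernel_symm hT.le ha) ha
  rw [show 2 * a - a = a by ring, show 2 * a + a = 3 * a by ring] at h
  convert h using 4 with ε ξ
  simp only [kernel, phase]
  push_cast
  ring_nf
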